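/- arXiv:1711.07295 — 7 statements merged into one kernel-verified Lean document; each statement's English description precedes it below -/
import Mathlib

section
/- With Bitmap-Xor bitmaps (b_s(i) = parity of the number of tokens of s hashing to position i), the overlap of r and s satisfies |r ∩ s| ≤ ⌊(|r| + |s| − hammingDist(b_r, b_s))/2⌋. -/
theorem bitmapXor_overlap_upper_bound
    {T : Type*} [Fintype T] [DecidableEq T] {b : ℕ} (hb : 0 < b)
    (h : T → Fin b) (r s : Finset T) :
    (r ∩ s).card ≤
      (r.card + s.card -
        hammingDist
          (fun i : Fin b => (((r.filter (fun t => h t = i)).card : ZMod 2)))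
          (fun i : Fin b => (((s.filter (fun t => h t = i)).card : ZMod 2)))) / 2 := by
  set f := fun i : Fin b => (((r.filter (fun t => h t = i)).card : ZMod 2)) with hf
  set g := fun i : Fin b => (((s.filter (fun t => h t = i)).card : ZMod 2)) with hg
  set u := (r \ s) ∪ (s \ r) with hu
  have key : ∀ i : Fin b, f i ≠ g i → i ∈ u.image h := by
    intro i hi
    by_contra hni
    apply hi
    have heq : r.filter (fun t => h t = i) = s.filter (fun t => h t = i) := by
      ext t
      simp only [Finset.mem_filter]
      constructor
      · rintro ⟨ht, hh⟩
        refine ⟨?_, hh⟩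
        by_contra hts
        exact hni (Finset.mem_image.2 ⟨t, Finset.mem_union.2
          (Or.inl (Finset.mem_sdiff.2 ⟨ht, hts⟩)), hh⟩)
      · rintro ⟨ht, hh⟩
        refine ⟨?_, hh⟩
        by_contra hts
        exact hni (Finset.mem_image.2 ⟨t, Finset.mem_union.2
          (Or.inr (Finset.mem_sdiff.2 ⟨ht, hts⟩)), hh⟩)
    simp [hf, hg, heq]
  have hD : hammingDist f g ≤ u.card := by
    calc hammingDist f g ≤ (u.image h).card := by
          apply Finset.card_le_card
          intro i hi
          simp only [Finset.mem_filter, Finset.mem_univ, true_and] at hi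
          exact key i hi
      _ ≤ u.card := Finset.card_image_le
  have h1 : (r \ s).card + (r ∩ s).card = r.card := Finset.card_sdiff_add_card_inter r s
  have h2 : (s \ r).card + (s ∩ r).card = s.card := Finset.card_sdiff_add_card_inter s r
  have h3 : (s ∩ r).card = (r ∩ s).card := by rw [Finset.inter_comm]
  have h4 : u.card = (r \ s).card + (s \ r).card := by
    rw [hu, Finset.card_union_of_disjoint]
    exact disjoint_sdiff_sdiff
  rw [Nat.le_div_iff_mul_le (by norm_num)]
  omega
end

section
/- With Bitmap-Set bitmaps (b_s(i) true iff some element of s hashes to i), the overlap satisfies |r ∩ s| ≤ ⌊(|r| + |s| − hammingDist(b_r, b_s))/2⌋. -/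
theorem bitmapSet_overlap_upper_bound
    {T : Type*} [Fintype T] [DecidableEq T] {b : ℕ} (hb : 0 < b)
    (h : T → Fin b) (r s : Finset T) :
    (r ∩ s).card ≤
      (r.card + s.card -
        hammingDist
          (fun i : Fin b => decide (∃ t ∈ r, h t = i))
          (fun i : Fin b => decide (∃ t ∈ s, h t = i))) / 2 := by
  set d := hammingDist (fun i : Fin b => decide (∃ t ∈ r, h t = i))
      (fun i : Fin b => decide (∃ t ∈ s, h t = i)) with hd
  have key : (r ∩ s).card * 2 + d ≤ r.card + s.card := by
    have hD : d = (Finset.univ.filter (fun i : Fin b =>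
        (decide (∃ t ∈ r, h t = i)) ≠ (decide (∃ t ∈ s, h t = i)))).card := rfl
    have hsub : (Finset.univ.filter (fun i : Fin b =>
        (decide (∃ t ∈ r, h t = i)) ≠ (decide (∃ t ∈ s, h t = i)))) ⊆
        (r \ s ∪ s \ r).image h := by
      intro i hi
      simp only [Finset.mem_filter, ne_eq, decide_eq_decide] at hi
      have hi' := hi.2
      simp only [Finset.mem_image, Finset.mem_union, Finset.mem_sdiff]
      by_cases hr : ∃ t ∈ r, h t = i
      · obtain ⟨t, ht, hti⟩ := hr
        have hs : ¬ ∃ t ∈ s, h t = i := fun hs =>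
          hi' (iff_of_true ⟨t, ht, hti⟩ hs)
        exact ⟨t, Or.inl ⟨ht, fun hts => hs ⟨t, hts, hti⟩⟩, hti⟩
      · have hs : ∃ t ∈ s, h t = i := by
          by_contra hs
          exact hi' (iff_of_false hr hs)
        obtain ⟨t, ht, hti⟩ := hs
        exact ⟨t, Or.inr ⟨ht, fun htr => hr ⟨t, htr, hti⟩⟩, hti⟩
    have hdle : d ≤ (r \ s).card + (s \ r).card := by
      calc d ≤ ((r \ s ∪ s \ r).image h).card := hD ▸ Finset.card_le_card hsub
        _ ≤ (r \ s ∪ s \ r).card := Finset.card_image_le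
        _ ≤ (r \ s).card + (s \ r).card := Finset.card_union_le _ _
    have h1 : (r ∩ s).card + (r \ s).card = r.card := Finset.card_inter_add_card_sdiff r s
    have h2 : (s ∩ r).card + (s \ r).card = s.card := Finset.card_inter_add_card_sdiff s r
    have h3 : (r ∩ s).card = (s ∩ r).card := by rw [Finset.inter_comm]
    omega
  have h2 : d ≤ r.card + s.card := by omega
  omega
end

section
/- If finite nonempty sets r and s satisfy cosine similarity |r∩s|/√(|r|·|s|) ≥ τ_c with 0 < τ_c ≤ 1 (real-valued), then τ_c²·|r| ≤ |s| and |s| ≤ |r|/τ_c² (Length Filter bound for Cosine). -/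
/-! Squaring `τ √(|r| |s|) ≤ |r ∩ s| ≤ |s|` gives `τ² |r| |s| ≤ |s|²`, and cancelling `|s|`
gives `τ² |r| ≤ |s|`; the other bound is the same argument with `r` and `s` exchanged. -/

lemma pos_of_le_div_sqrt {τ c x : ℝ} (hτ : 0 < τ) (h : τ ≤ c / √x) : 0 < x := by
  by_contra! hx
  rw [Real.sqrt_eq_zero'.mpr hx, div_zero] at h
  exact h.not_gt hτ

lemma sq_mul_le_sq_of_le_div_sqrt {τ c x : ℝ} (hτ : 0 < τ) (h : τ ≤ c / √x) :
    τ ^ 2 * x ≤ c ^ 2 := by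
  have hx := pos_of_le_div_sqrt hτ h
  have hmul : τ * √x ≤ c := (le_div_iff₀ (Real.sqrt_pos.mpr hx)).mp h
  calc τ ^ 2 * x = (τ * √x) ^ 2 := by rw [mul_pow, Real.sq_sqrt hx.le]
    _ ≤ c ^ 2 := pow_le_pow_left₀ (by positivity) hmul 2

lemma sq_mul_le_of_le_div_sqrt_mul {τ c a b : ℝ} (hτ : 0 < τ) (hc : 0 ≤ c) (hcb : c ≤ b)
    (h : τ ≤ c / √(a * b)) : τ ^ 2 * a ≤ b := by
  have hab := pos_of_le_div_sqrt hτ h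
  have hb : 0 < b := lt_of_le_of_ne (hc.trans hcb) fun hb0 => by simp [← hb0] at hab
  have hsq : τ ^ 2 * a * b ≤ b * b := by
    rw [mul_assoc, ← sq]
    exact (sq_mul_le_sq_of_le_div_sqrt hτ h).trans (pow_le_pow_left₀ hc hcb 2)
  exact le_of_mul_le_mul_right hsq hb

theorem cosine_length_filter_general
    {α : Type*} [DecidableEq α] (r s : Finset α) (τc : ℝ)
    (hτ0 : 0 < τc)
    (hsim : ((r ∩ s).card : ℝ) / Real.sqrt ((r.card : ℝ) * (s.card : ℝ)) ≥ τc) :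
    τc ^ 2 * (r.card : ℝ) ≤ (s.card : ℝ) ∧ (s.card : ℝ) ≤ (r.card : ℝ) / τc ^ 2 := by
  have hinter_r : ((r ∩ s).card : ℝ) ≤ r.card := by
    exact_mod_cast Finset.card_le_card Finset.inter_subset_left
  have hinter_s : ((r ∩ s).card : ℝ) ≤ s.card := by
    exact_mod_cast Finset.card_le_card Finset.inter_subset_right
  refine ⟨sq_mul_le_of_le_div_sqrt_mul hτ0 (Nat.cast_nonneg _) hinter_s hsim, ?_⟩
  rw [mul_comm] at hsim
  rw [le_div_iff₀ (by positivity), mul_comm]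
  exact sq_mul_le_of_le_div_sqrt_mul hτ0 (Nat.cast_nonneg _) hinter_r hsim

theorem cosine_length_filter
    {α : Type*} [DecidableEq α] (r s : Finset α) (τc : ℝ)
    (hτ0 : 0 < τc) (hτ1 : τc ≤ 1) (hr : r.Nonempty) (hs : s.Nonempty)
    (hsim : ((r ∩ s).card : ℝ) / Real.sqrt ((r.card : ℝ) * (s.card : ℝ)) ≥ τc) :
    τc ^ 2 * (r.card : ℝ) ≤ (s.card : ℝ) ∧ (s.card : ℝ) ≤ (r.card : ℝ) / τc ^ 2 :=
  cosine_length_filter_general r s τc hτ0 hsim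
end

section
/- If finite nonempty sets r and s satisfy Dice similarity 2|r∩s|/(|r|+|s|) ≥ τ_d with 0 < τ_d ≤ 1, then (τ_d/(2−τ_d))·|r| ≤ |s| and |s| ≤ ((2−τ_d)/τ_d)·|r| (Length Filter bound for Dice). -/
theorem dice_length_filter
    {α : Type*} [DecidableEq α] (r s : Finset α) (τd : ℚ)
    (hτ0 : 0 < τd) (hτ1 : τd ≤ 1) (hr : r.Nonempty) (hs : s.Nonempty)
    (hsim : 2 * ((r ∩ s).card : ℚ) / ((r.card : ℚ) + (s.card : ℚ)) ≥ τd) :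
    (τd / (2 - τd)) * (r.card : ℚ) ≤ (s.card : ℚ) ∧
      (s.card : ℚ) ≤ ((2 - τd) / τd) * (r.card : ℚ) := by
  have hrc : (0:ℚ) < r.card := by exact_mod_cast hr.card_pos
  have hsc : (0:ℚ) < s.card := by exact_mod_cast hs.card_pos
  have hsum : (0:ℚ) < (r.card : ℚ) + s.card := by linarith
  have hkey : τd * ((r.card : ℚ) + s.card) ≤ 2 * ((r ∩ s).card : ℚ) := by
    rw [ge_iff_le, le_div_iff₀ hsum] at hsim
    linarith
  have h1 : ((r ∩ s).card : ℚ) ≤ r.card := by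
    exact_mod_cast Finset.card_le_card (Finset.inter_subset_left)
  have h2 : ((r ∩ s).card : ℚ) ≤ s.card := by
    exact_mod_cast Finset.card_le_card (Finset.inter_subset_right)
  have h2τ : (0:ℚ) < 2 - τd := by linarith
  constructor
  · rw [div_mul_eq_mul_div, div_le_iff₀ h2τ]; nlinarith
  · rw [div_mul_eq_mul_div, le_div_iff₀ hτ0]; nlinarith
end

section
/- Prefix Filter correctness (overlap version): Let r and s be finite lists of distinct tokens sorted by a fixed linear order, and suppose |r ∩ s| ≥ τ for a positive integer τ. Then the prefix of r of length |r| − τ + 1 and the prefix of s of length |s| − τ + 1 share at least one common token. -/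
/-!
Let `x` be the least common token of `r` and `s`. All `τ` common tokens are `≥ x`, so in either
list at least `τ` entries are `≥ x`. In a strictly sorted list, an element lying outside the
first `k` entries is larger than all of them, so at most `length - k` entries are `≥ x`; with
`k = length - τ + 1` this is fewer than `τ`. Hence `x` lies in both prefixes.
-/

theorem List.Pairwise.mem_take_of_length_sub_lt_card_filter_le {α : Type*} [LinearOrder α]
    {l : List α} (hl : l.Pairwise (· < ·)) {x : α} (hx : x ∈ l) {k : ℕ}
    (h : l.length - k < {y ∈ l.toFinset | x ≤ y}.card) :
    x ∈ l.take k := by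
  by_contra hxk
  have hsplit := (List.pairwise_append.mp (l.take_append_drop k ▸ hl)).2.2
  have hsub : {y ∈ l.toFinset | x ≤ y} ⊆ (l.drop k).toFinset := by
    intro y hy
    obtain ⟨hyl, hxy⟩ := Finset.mem_filter.mp hy
    rw [← l.take_append_drop k, List.toFinset_append, Finset.mem_union] at hyl
    rw [← l.take_append_drop k, List.mem_append] at hx
    refine hyl.resolve_left fun hyk => ?_
    exact (hxy.trans_lt (hsplit y (List.mem_toFinset.mp hyk) x (hx.resolve_left hxk))).false
  have hcard : {y ∈ l.toFinset | x ≤ y}.card ≤ l.length - k :=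
    calc _ ≤ (l.drop k).toFinset.card := Finset.card_le_card hsub
      _ ≤ (l.drop k).length := List.toFinset_card_le _
      _ = l.length - k := List.length_drop
  omega

theorem prefix_filter_overlap_general
    {α : Type*} [LinearOrder α] (r s : List α) (τ : ℕ)
    (hr : r.Pairwise (· < ·)) (hs : s.Pairwise (· < ·))
    (hτ0 : 0 < τ)
    (hov : τ ≤ (r.toFinset ∩ s.toFinset).card) :
    ∃ t, t ∈ r.take (r.length - τ + 1) ∧ t ∈ s.take (s.length - τ + 1) := by
  set I := r.toFinset ∩ s.toFinset
  have hI : I.Nonempty := Finset.card_pos.mp (hτ0.trans_le hov)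
  have hmin_mem_take : ∀ l : List α, l.Pairwise (· < ·) → I ⊆ l.toFinset →
      I.min' hI ∈ l.take (l.length - τ + 1) := by
    intro l hl hIl
    refine hl.mem_take_of_length_sub_lt_card_filter_le
      (List.mem_toFinset.mp (hIl (I.min'_mem hI))) ?_
    have hupper : I ⊆ {y ∈ l.toFinset | I.min' hI ≤ y} := fun y hy =>
      Finset.mem_filter.mpr ⟨hIl hy, I.min'_le y hy⟩
    have := hov.trans (Finset.card_le_card hupper)
    omega
  exact ⟨I.min' hI, hmin_mem_take r hr Finset.inter_subset_left,
    hmin_mem_take s hs Finset.inter_subset_right⟩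

theorem prefix_filter_overlap
    {α : Type*} [LinearOrder α] (r s : List α) (τ : ℕ)
    (hr : r.Pairwise (· < ·)) (hs : s.Pairwise (· < ·))
    (hτ0 : 0 < τ) (hτr : τ ≤ r.length) (hτs : τ ≤ s.length)
    (hov : τ ≤ (r.toFinset ∩ s.toFinset).card) :
    ∃ t, t ∈ r.take (r.length - τ + 1) ∧ t ∈ s.take (s.length - τ + 1) :=
  prefix_filter_overlap_general r s τ hr hs hτ0 hov
end

section
/- Positional Filter overlap bound: Let r and s be strictly sorted lists over a linearly ordered type, and suppose a common token t occurs at (1-based) position p in r and position q in s. Then |r ∩ s| ≤ 1 + min(p−1, q−1) + min(|r|−p, |s|−q). -/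
/-!
Split the common elements into `t`, those below `t` and those above `t`. In a strictly sorted
list every element below `t` occurs before the position of `t`, so at most `min (p - 1) (q - 1)`
common elements lie below `t`; symmetrically at most `min (|r| - p) (|s| - q)` lie above it.
-/

namespace Finset

variable {α : Type*} [LinearOrder α]

theorem card_le_one_add_card_filter_lt_add_card_filter_gt (F : Finset α) (t : α) :
    #F ≤ 1 + #(F.filter (· < t)) + #(F.filter (t < ·)) := by
  have hcover : F ⊆ insert t (F.filter (· < t) ∪ F.filter (t < ·)) := by
    intro x hx
    rcases lt_trichotomy x t with h | rfl | h
    · simp [hx, h]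
    · exact mem_insert_self _ _
    · simp [hx, h]
  calc #F ≤ #(insert t (F.filter (· < t) ∪ F.filter (t < ·))) := card_le_card hcover
    _ ≤ #(F.filter (· < t) ∪ F.filter (t < ·)) + 1 := card_insert_le _ _
    _ ≤ 1 + #(F.filter (· < t)) + #(F.filter (t < ·)) := by
      have := card_union_le (F.filter (· < t)) (F.filter (t < ·))
      omega

theorem card_filter_inter_le_min {A B : Finset α} {P : α → Prop} [DecidablePred P] :
    #((A ∩ B).filter P) ≤ min #(A.filter P) #(B.filter P) :=
  le_min (card_le_card (filter_subset_filter P inter_subset_left))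
    (card_le_card (filter_subset_filter P inter_subset_right))

end Finset

namespace List

open Finset

theorem eq_take_append_getElem_cons_drop {α : Type*} (l : List α) {i : ℕ} (hi : i < l.length) :
    l = l.take i ++ l[i] :: l.drop (i + 1) := by
  rw [getElem_cons_drop, take_append_drop]

variable {α : Type*} [LinearOrder α] {a b : List α} {x : α}

theorem Pairwise.toFinset_filter_lt_subset (h : (a ++ x :: b).Pairwise (· < ·)) :
    (a ++ x :: b).toFinset.filter (· < x) ⊆ a.toFinset := by
  intro y hy
  simp only [Finset.mem_filter, mem_toFinset, mem_append, mem_cons] at hy ⊢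
  obtain ⟨hya | rfl | hyb, hyx⟩ := hy
  · exact hya
  · exact absurd hyx (lt_irrefl y)
  · have hxy : x < y := (pairwise_cons.mp (pairwise_append.mp h).2.1).1 y hyb
    exact absurd hyx hxy.not_gt

theorem Pairwise.toFinset_filter_gt_subset (h : (a ++ x :: b).Pairwise (· < ·)) :
    (a ++ x :: b).toFinset.filter (x < ·) ⊆ b.toFinset := by
  intro y hy
  simp only [Finset.mem_filter, mem_toFinset, mem_append, mem_cons] at hy ⊢
  obtain ⟨hya | rfl | hyb, hxy⟩ := hy
  · have hyx : y < x := (pairwise_append.mp h).2.2 y hya x mem_cons_self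
    exact absurd hxy hyx.not_gt
  · exact absurd hxy (lt_irrefl y)
  · exact hyb

theorem Pairwise.card_toFinset_filter_lt_le {l : List α} (h : l.Pairwise (· < ·)) {i : ℕ}
    (hi : i < l.length) (hx : l[i] = x) : #(l.toFinset.filter (· < x)) ≤ i := by
  have hl := eq_take_append_getElem_cons_drop l hi
  rw [hx] at hl
  rw [hl] at h ⊢
  calc _ ≤ #(l.take i).toFinset := card_le_card h.toFinset_filter_lt_subset
    _ ≤ (l.take i).length := toFinset_card_le _
    _ ≤ i := by simp

theorem Pairwise.card_toFinset_filter_gt_le {l : List α} (h : l.Pairwise (· < ·)) {i : ℕ}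
    (hi : i < l.length) (hx : l[i] = x) : #(l.toFinset.filter (x < ·)) ≤ l.length - (i + 1) := by
  have hl := eq_take_append_getElem_cons_drop l hi
  rw [hx] at hl
  nth_rw 1 [hl]
  rw [hl] at h
  calc _ ≤ #(l.drop (i + 1)).toFinset := card_le_card h.toFinset_filter_gt_subset
    _ ≤ (l.drop (i + 1)).length := toFinset_card_le _
    _ = l.length - (i + 1) := length_drop

end List

open Finset in
theorem positional_filter_overlap_bound
    {α : Type*} [LinearOrder α] (r s : List α) (p q : ℕ) (t : α)
    (hr : r.Pairwise (· < ·)) (hs : s.Pairwise (· < ·))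
    (hp1 : 1 ≤ p) (hq1 : 1 ≤ q)
    (hp : p - 1 < r.length) (hq : q - 1 < s.length)
    (hrt : r[p - 1] = t) (hst : s[q - 1] = t) :
    (r.toFinset ∩ s.toFinset).card ≤
      1 + min (p - 1) (q - 1) + min (r.length - p) (s.length - q) := by
  have hr_lt := hr.card_toFinset_filter_lt_le hp hrt
  have hs_lt := hs.card_toFinset_filter_lt_le hq hst
  have hr_gt : #(r.toFinset.filter (t < ·)) ≤ r.length - p := by
    have := hr.card_toFinset_filter_gt_le hp hrt
    omega
  have hs_gt : #(s.toFinset.filter (t < ·)) ≤ s.length - q := by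
    have := hs.card_toFinset_filter_gt_le hq hst
    omega
  calc #(r.toFinset ∩ s.toFinset)
      ≤ 1 + #((r.toFinset ∩ s.toFinset).filter (· < t))
          + #((r.toFinset ∩ s.toFinset).filter (t < ·)) :=
        card_le_one_add_card_filter_lt_add_card_filter_gt _ t
    _ ≤ 1 + min (p - 1) (q - 1) + min (r.length - p) (s.length - q) := by
        gcongr
        · exact card_filter_inter_le_min.trans (min_le_min hr_lt hs_lt)
        · exact card_filter_inter_le_min.trans (min_le_min hr_gt hs_gt)
end

section
/- Bitmap-Next exactness of popcount: Let s be a finite set with |s| ≤ b, and let the Bitmap-Next bitmap be constructed by inserting each element at its hash position or the next circularly-available unset position. Then the resulting bitmap has exactly |s| bits set. -/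
open Fin.NatCast in
/-- Insert a bit into the bitmap at position `i`, or at the next (circularly)
unset position after `i` if `i` is already set (Bitmap-Next insertion). -/
def insertNext {b : ℕ} [NeZero b] (bm : Fin b → Bool) (i : Fin b) : Fin b → Bool :=
  match ((List.range b).map (fun k => i + (k : Fin b))).find? (fun j => !bm j) with
  | some j => Function.update bm j true
  | none => bm

/-- The Bitmap-Next bitmap of a list of tokens under hash function `h`. -/
def bitmapNext {T : Type*} {b : ℕ} [NeZero b] (h : T → Fin b) (s : List T) : Fin b → Bool :=
  s.foldl (fun bm t => insertNext bm (h t)) (fun _ => false)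

/-!
Each insertion sets exactly one bit that was unset before, provided some bit is still unset:
the probe sequence `i, i + 1, …, i + (b - 1)` visits every position of `Fin b`. Starting from
the empty bitmap, the `n ≤ b` insertions therefore raise the population count by one each.
-/

def popcount {b : ℕ} (bm : Fin b → Bool) : ℕ :=
  (Finset.univ.filter (fun i : Fin b => bm i = true)).card

lemma popcount_update_true {b : ℕ} {bm : Fin b → Bool} {j : Fin b} (hj : bm j = false) :
    popcount (Function.update bm j true) = popcount bm + 1 := by
  have hset : Finset.univ.filter (fun x => Function.update bm j true x = true)
      = insert j (Finset.univ.filter (fun x => bm x = true)) := by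
    ext x
    by_cases hx : x = j <;> simp [Function.update, hx]
  rw [popcount, hset, Finset.card_insert_of_notMem (by simp [hj]), popcount]

lemma exists_eq_false_of_popcount_lt {b : ℕ} {bm : Fin b → Bool} (hc : popcount bm < b) :
    ∃ j, bm j = false := by
  by_contra! hall
  simp [popcount, hall] at hc

open Fin.NatCast in
-- The cast `(k : Fin b)` elaborates as a monadic lift of the whole list `List.range b`.
lemma mem_map_add_range {b : ℕ} [NeZero b] (i j : Fin b) :
    j ∈ (List.range b).map (fun k => i + (k : Fin b)) := by
  simp only [List.mem_map, List.mem_range, bind_pure_comp, List.map_eq_map]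
  exact ⟨j - i, ⟨(j - i).val, (j - i).isLt, Fin.cast_val_eq_self _⟩, by abel⟩

lemma insertNext_eq_update {b : ℕ} [NeZero b] {bm : Fin b → Bool} (i : Fin b)
    (hex : ∃ j, bm j = false) :
    ∃ j, bm j = false ∧ insertNext bm i = Function.update bm j true := by
  unfold insertNext
  split
  case h_1 j hj => exact ⟨j, by simpa using List.find?_some hj, rfl⟩
  case h_2 hnone =>
    obtain ⟨j, hj⟩ := hex
    simpa [hj] using List.find?_eq_none.1 hnone j (mem_map_add_range i j)

lemma popcount_insertNext {b : ℕ} [NeZero b] {bm : Fin b → Bool} (i : Fin b)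
    (hc : popcount bm < b) : popcount (insertNext bm i) = popcount bm + 1 := by
  obtain ⟨j, hj, heq⟩ := insertNext_eq_update i (exists_eq_false_of_popcount_lt hc)
  rw [heq, popcount_update_true hj]

lemma popcount_foldl_insertNext {T : Type*} {b : ℕ} [NeZero b] (h : T → Fin b) (s : List T)
    (bm : Fin b → Bool) (hs : popcount bm + s.length ≤ b) :
    popcount (s.foldl (fun m t => insertNext m (h t)) bm) = popcount bm + s.length := by
  induction s generalizing bm with
  | nil => rfl
  | cons t s ih =>
    rw [List.length_cons] at hs
    have hc : popcount bm < b := by omega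
    rw [List.foldl_cons, ih _ (by rw [popcount_insertNext _ hc]; omega),
      popcount_insertNext _ hc, List.length_cons]
    omega

theorem bitmapNext_popcount_general {T : Type*} {b : ℕ} [NeZero b] (h : T → Fin b)
    (s : List T) (hlen : s.length ≤ b) :
    (Finset.univ.filter (fun i : Fin b => bitmapNext h s i = true)).card = s.length := by
  have hempty : popcount (fun _ : Fin b => false) = 0 := by simp [popcount]
  have := popcount_foldl_insertNext h s (fun _ => false) (by omega)
  rwa [hempty, zero_add] at this

theorem bitmapNext_popcount {T : Type*} {b : ℕ} [NeZero b] (h : T → Fin b)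
    (s : List T) (hnd : s.Nodup) (hlen : s.length ≤ b) :
    (Finset.univ.filter (fun i : Fin b => bitmapNext h s i = true)).card = s.length :=
  bitmapNext_popcount_general h s hlen
end
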